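/- arXiv:2204.03892 — 2 statements merged into one kernel-verified Lean document; each statement's English description precedes it below -/
import Mathlib

section
/- For the morphism σ̃ : a ↦ ba, b ↦ a (reversed Fibonacci morphism) with t the unique left-special sequence of the Fibonacci shift (the fixed point of σ : a ↦ ab, b ↦ a), one has t = σ̃(bt) = S σ̃(at); more generally, setting F_n = |σ̃^{n−1}(b)|, for every n ≥ 1 and every 0 ≤ i < F_{n+1}, the sequence S^i σ̃ⁿ(bt) has the two distinct σ̃ⁿ-representations (σ̃ⁿ(bt), i) and (σ̃ⁿ(at), F_n + i). Hence the number of points at which a morphism fails one-sided recognizability can be arbitrarily large. -/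
open scoped Classical

noncomputable section

variable {A B : Type*}

/-- The two-sided shift map. -/
def shiftZ (x : ℤ → A) : ℤ → A := fun n => x (n + 1)

/-- The one-sided shift map. -/
def shiftN (x : ℕ → A) : ℕ → A := fun n => x (n + 1)

/-- The one-sided sequence `x⁺` associated to a two-sided sequence. -/
def plusSeq (x : ℤ → A) : ℕ → A := fun n => x (n : ℤ)

/-- The one-sided shift space `X⁺` associated to a set of two-sided sequences. -/
def SetPlus (X : Set (ℤ → A)) : Set (ℕ → A) := plusSeq '' X

/-- `X` is a (two-sided) shift space: closed and shift invariant. -/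
def IsShiftZ [TopologicalSpace A] (X : Set (ℤ → A)) : Prop :=
  IsClosed X ∧ shiftZ '' X = X

/-- `X` is a one-sided shift space: closed and shift invariant. -/
def IsShiftN [TopologicalSpace A] (X : Set (ℕ → A)) : Prop :=
  IsClosed X ∧ shiftN '' X = X

/-- Image of a word under a morphism given by its values on letters. -/
def wordImg (σ : A → List B) (w : List A) : List B := (w.map σ).flatten

/-- `σ(x₀ ⋯ x_{n-1})` for a one-sided sequence `x`. -/
def prefixImg (σ : A → List B) (x : ℕ → A) (n : ℕ) : List B :=
  wordImg σ (List.ofFn fun i : Fin n => x i)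

/-- `y = σ(x)` for one-sided sequences, with `σ(x)` infinite. -/
def OneSidedImage (σ : A → List B) (x : ℕ → A) (y : ℕ → B) : Prop :=
  (∀ m : ℕ, ∃ n : ℕ, m ≤ (prefixImg σ x n).length) ∧
  ∀ n : ℕ, ∀ i : ℕ, ∀ h : i < (prefixImg σ x n).length, y i = (prefixImg σ x n).get ⟨i, h⟩

/-- `σ(x_{[-n,m)})` for a two-sided sequence `x`. -/
def segImg (σ : A → List B) (x : ℤ → A) (n m : ℕ) : List B :=
  wordImg σ (List.ofFn fun i : Fin (n + m) => x ((i : ℤ) - (n : ℤ)))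

/-- `|σ(x_{[-n,0)})|`. -/
def negLen (σ : A → List B) (x : ℤ → A) (n : ℕ) : ℕ :=
  (wordImg σ (List.ofFn fun i : Fin n => x ((i : ℤ) - (n : ℤ)))).length

/-- `y = σ(x)` for two-sided sequences, with `σ(x)` two-sided infinite
(the letter `x₀` is sent at position `0`). -/
def TwoSidedImage (σ : A → List B) (x : ℤ → A) (y : ℤ → B) : Prop :=
  (∀ m : ℕ, ∃ n : ℕ, m ≤ (prefixImg σ (plusSeq x) n).length) ∧
  (∀ m : ℕ, ∃ n : ℕ, m ≤ negLen σ x n) ∧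
  ∀ n m : ℕ, ∀ i : ℕ, ∀ h : i < (segImg σ x n m).length,
    y ((i : ℤ) - (negLen σ x n : ℤ)) = (segImg σ x n m).get ⟨i, h⟩

/-- `(x,k)` is a σ-representation of the two-sided sequence `y`, with `x ∈ X`. -/
def IsRepZ (σ : A → List B) (X : Set (ℤ → A)) (y : ℤ → B) (x : ℤ → A) (k : ℕ) : Prop :=
  x ∈ X ∧ k < (σ (x 0)).length ∧ ∃ z, TwoSidedImage σ x z ∧ ∀ n : ℤ, y n = z (n + k)

/-- `σ` is recognizable on `X` at the two-sided point `y`. -/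
def RecognizableAtZ (σ : A → List B) (X : Set (ℤ → A)) (y : ℤ → B) : Prop :=
  ∀ x k x' k', IsRepZ σ X y x k → IsRepZ σ X y x' k' → x = x' ∧ k = k'

/-- `σ` is recognizable on `X`. -/
def RecognizableZ (σ : A → List B) (X : Set (ℤ → A)) : Prop :=
  ∀ y : ℤ → B, RecognizableAtZ σ X y

/-- `(x,k)` is a σ-representation of the one-sided sequence `y`, with `x ∈ X`. -/
def IsRepN (σ : A → List B) (X : Set (ℕ → A)) (y : ℕ → B) (x : ℕ → A) (k : ℕ) : Prop :=
  x ∈ X ∧ k < (σ (x 0)).length ∧ ∃ z, OneSidedImage σ x z ∧ ∀ n : ℕ, y n = z (n + k)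

/-- `σ` is one-sided recognizable on `X` at `y`. -/
def RecognizableAtN (σ : A → List B) (X : Set (ℕ → A)) (y : ℕ → B) : Prop :=
  ∀ x k x' k', IsRepN σ X y x k → IsRepN σ X y x' k' → x = x' ∧ k = k'

/-- `σ` is one-sided recognizable on `X`. -/
def RecognizableN (σ : A → List B) (X : Set (ℕ → A)) : Prop :=
  ∀ y : ℕ → B, RecognizableAtN σ X y

/-- The set `C(x)` of cutting points of a two-sided sequence. -/
def CutSet (σ : A → List B) (x : ℤ → A) : Set ℤ :=
  {m | ∃ n : ℕ, m = ((prefixImg σ (plusSeq x) n).length : ℤ)} ∪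
  {m | ∃ n : ℕ, m = -((negLen σ x n : ℤ))}

/-- The set `C⁺(x)` of cutting points of a one-sided sequence. -/
def CutSetPlus (σ : A → List B) (x : ℕ → A) : Set ℕ :=
  {m | ∃ n : ℕ, m = (prefixImg σ x n).length}

/-- Recognizability in the sense of Mossé with scope `N` (two-sided windows). -/
def MosseRec (σ : A → List B) (x : ℤ → A) (y : ℤ → B) (N : ℕ) : Prop :=
  ∀ i j : ℤ, (∀ d : ℤ, -(N : ℤ) ≤ d → d ≤ N → y (i + d) = y (j + d)) →
    (i ∈ CutSet σ x ↔ j ∈ CutSet σ x)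

/-- One-sided recognizability in the sense of Mossé with scope `N`, for a two-sided point. -/
def MosseRecOne (σ : A → List B) (x : ℤ → A) (y : ℤ → B) (N : ℕ) : Prop :=
  ∀ i j : ℤ, (∀ d : ℕ, d < N → y (i + d) = y (j + d)) →
    (i ∈ CutSet σ x ↔ j ∈ CutSet σ x)

/-- One-sided recognizability in the sense of Mossé with scope `N`, for a one-sided point. -/
def MosseRecOneN (σ : A → List B) (x : ℕ → A) (y : ℕ → B) (N : ℕ) : Prop :=
  ∀ i j : ℕ, (∀ d : ℕ, d < N → y (i + d) = y (j + d)) →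
    (i ∈ CutSetPlus σ x ↔ j ∈ CutSetPlus σ x)

/-- The extension of `σ` to words. -/
def substWord (σ : A → List A) : List A → List A := fun w => wordImg σ w

/-- The `n`-th power of the endomorphism `σ`, as a map on letters. -/
def wordPow (σ : A → List A) (n : ℕ) : A → List A := fun a => (substWord σ)^[n] [a]

/-- `w` belongs to the language `L(σ)` of the endomorphism `σ`. -/
def InLangSigma (σ : A → List A) (w : List A) : Prop :=
  ∃ n : ℕ, ∃ a : A, w <:+: (substWord σ)^[n] [a]

/-- The substitution shift `X(σ)`. -/
def Xsig (σ : A → List A) : Set (ℤ → A) :=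
  {x | ∀ k : ℤ, ∀ n : ℕ, InLangSigma σ (List.ofFn fun i : Fin n => x (k + (i : ℤ)))}

/-- The (two-sided) orbit of a two-sided sequence under the shift. -/
def orbitZ (x : ℤ → A) : Set (ℤ → A) := {y | ∃ n : ℤ, ∀ i, y i = x (i + n)}

/-- The forward orbit of a one-sided sequence under the shift. -/
def orbitN (x : ℕ → A) : Set (ℕ → A) := {y | ∃ n : ℕ, ∀ i, y i = x (i + n)}

/-- A two-sided sequence is periodic. -/
def PeriodicZ (x : ℤ → A) : Prop := ∃ n : ℕ, 1 ≤ n ∧ ∀ i, x (i + n) = x i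

/-- A one-sided sequence is periodic. -/
def PeriodicN (x : ℕ → A) : Prop := ∃ n : ℕ, 1 ≤ n ∧ ∀ i, x (i + n) = x i

/-- Minimality of a two-sided shift space. -/
def MinimalZ [TopologicalSpace A] (X : Set (ℤ → A)) : Prop :=
  X.Nonempty ∧ ∀ x ∈ X, X ⊆ closure (orbitZ x)

/-- Minimality of a one-sided shift space. -/
def MinimalN [TopologicalSpace A] (X : Set (ℕ → A)) : Prop :=
  X.Nonempty ∧ ∀ x ∈ X, X ⊆ closure (orbitN x)

/-- Prepend a letter to a one-sided sequence. -/
def consSeq (a : A) (x : ℕ → A) : ℕ → A := fun i => match i with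
  | 0 => a
  | j + 1 => x j

/-- Prepend a word to a one-sided sequence. -/
def prependSeq (w : List A) (x : ℕ → A) : ℕ → A := fun i =>
  if h : i < w.length then w.get ⟨i, h⟩ else x (i - w.length)

/-- `u` is left-special in the one-sided shift `X`. -/
def LeftSpecial (X : Set (ℕ → A)) (u : ℕ → A) : Prop :=
  2 ≤ Nat.card {a : A // consSeq a u ∈ X}

/-- Two two-sided sequences are asymptotically equivalent. -/
def AsympEq (x y : ℤ → A) : Prop := ∃ n m : ℤ, ∀ i : ℕ, x (n + i) = y (m + i)

/-- `C` is an asymptotic class of `X`. -/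
def IsAsympClass (X : Set (ℤ → A)) (C : Set (ℤ → A)) : Prop :=
  ∃ x ∈ X, C = {y ∈ X | AsympEq x y}

/-- An asymptotic class is non-trivial if it is not reduced to a single orbit. -/
def NontrivialClass (C : Set (ℤ → A)) : Prop :=
  ∃ y ∈ C, ∃ z ∈ C, z ∉ orbitZ y

/-- The closure under the shift of `σ(X)`. -/
def imageShiftClosure [TopologicalSpace B] (σ : A → List B) (X : Set (ℤ → A)) :
    Set (ℤ → B) :=
  closure {y | ∃ x ∈ X, ∃ z, TwoSidedImage σ x z ∧ ∃ m : ℤ, ∀ i, y i = z (i + m)}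

/-- The Fibonacci morphism `a ↦ ab, b ↦ a`, with `a = false`, `b = true`. -/
def fib : Bool → List Bool := fun c => if c then [false] else [false, true]

/-- The reversed Fibonacci morphism `σ̃ : a ↦ ba, b ↦ a`. -/
def tfib : Bool → List Bool := fun c => if c then [false] else [true, false]

/-!
Since `a σ̃(w) = σ(w) a`, the prefixes `σ(t₀⋯t_{k-1}) a` of `t = σ(t)` give `σ̃(bt) = t`, hence
`σ̃(at) = bt`, and `σ̃` swaps `abt` and `bat`. With `σ̃ⁿ(a) = σ̃ⁿ⁻¹(b) σ̃ⁿ(b)` this yields the two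
representations. What remains is that `at` and `bt` lie in `X(σ̃)⁺`. As `σ̃` is `σ` read
backwards, `σ̃²ᵐ(a)` ends with the mirror image of `t₀⋯t_{m-1}`, while `σ̃²ᵐ(c)` begins with
the first `m` letters of the `σ̃²`-fixed point `c c̄ t` (`c̄` the other letter). So every
central word of the two-sided point `⋯t₁t₀ . c c̄ t` is a factor of `σ̃²ᵐ(ac)`, which lies in
`σ̃²ᵐ⁺³(a)`; shifting this point once puts `c̄ t` in `X(σ̃)⁺`.
-/

def seqPrefix (x : ℕ → A) (n : ℕ) : List A := List.ofFn fun i : Fin n => x i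

def IsSeqPrefix (w : List A) (x : ℕ → A) : Prop := ∀ i (h : i < w.length), w[i] = x i

@[simp]
lemma length_seqPrefix (x : ℕ → A) (n : ℕ) : (seqPrefix x n).length = n := by
  simp [seqPrefix]

@[simp]
lemma getElem_seqPrefix (x : ℕ → A) (n i : ℕ) (h : i < (seqPrefix x n).length) :
    (seqPrefix x n)[i] = x i := by
  simp [seqPrefix]

lemma seqPrefix_succ (x : ℕ → A) (n : ℕ) : seqPrefix x (n + 1) = seqPrefix x n ++ [x n] := by
  rw [seqPrefix, List.ofFn_succ', List.concat_eq_append]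
  rfl

lemma seqPrefix_consSeq (c : A) (x : ℕ → A) (n : ℕ) :
    seqPrefix (consSeq c x) (n + 1) = c :: seqPrefix x n := by
  simp only [seqPrefix, List.ofFn_succ]
  rfl

lemma isSeqPrefix_nil (x : ℕ → A) : IsSeqPrefix [] x := fun _ h => absurd h (Nat.not_lt_zero _)

lemma IsSeqPrefix.of_prefix {v w : List A} {x : ℕ → A} (hw : IsSeqPrefix w x) (hvw : v <+: w) :
    IsSeqPrefix v x :=
  fun i h => (hvw.getElem h).trans (hw i _)

lemma IsSeqPrefix.seqPrefix_prefix {w : List A} {x : ℕ → A} (hw : IsSeqPrefix w x) {n : ℕ}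
    (hn : n ≤ w.length) : seqPrefix x n <+: w := by
  rw [List.prefix_iff_eq_take]
  apply List.ext_getElem (by simp [hn])
  intro i h _
  simp [hw i (by simp at h; omega)]

lemma IsSeqPrefix.prependSeq {w : List A} {y : ℕ → A} (hw : IsSeqPrefix w y) (u : List A) :
    IsSeqPrefix (u ++ w) (prependSeq u y) := by
  intro i h
  unfold _root_.prependSeq
  split_ifs with hi
  · simp [List.getElem_append_left hi]
  · rw [List.getElem_append_right (by omega), hw]

lemma prependSeq_nil (y : ℕ → A) : prependSeq [] y = y := by
  funext i
  simp [prependSeq]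

lemma prependSeq_cons (c : A) (u : List A) (y : ℕ → A) :
    prependSeq (c :: u) y = consSeq c (prependSeq u y) := by
  funext i
  cases i <;> simp [prependSeq, consSeq]

lemma prependSeq_append (u v : List A) (y : ℕ → A) :
    prependSeq (u ++ v) y = prependSeq u (prependSeq v y) := by
  induction u with
  | nil => simp [prependSeq_nil]
  | cons c u ih => simp [prependSeq_cons, ih]

lemma prependSeq_length_add (u : List A) (y : ℕ → A) (j : ℕ) :
    prependSeq u y (u.length + j) = y j := by
  simp [prependSeq]

section Morphism

variable {σ : A → List B}

@[simp]
lemma wordImg_nil (σ : A → List B) : wordImg σ [] = [] := rfl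

@[simp]
lemma wordImg_cons (σ : A → List B) (c : A) (w : List A) :
    wordImg σ (c :: w) = σ c ++ wordImg σ w := by
  simp [wordImg]

@[simp]
lemma wordImg_append (σ : A → List B) (u v : List A) :
    wordImg σ (u ++ v) = wordImg σ u ++ wordImg σ v := by
  simp [wordImg]

lemma wordImg_wordImg {C : Type*} (σ : B → List C) (τ : A → List B) (w : List A) :
    wordImg σ (wordImg τ w) = wordImg (fun c => wordImg σ (τ c)) w := by
  induction w with
  | nil => rfl
  | cons c w ih => simp [ih]

lemma le_length_wordImg {k : ℕ} (hσ : ∀ c, k ≤ (σ c).length) (w : List A) :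
    k * w.length ≤ (wordImg σ w).length := by
  induction w with
  | nil => simp
  | cons c w ih =>
    simp only [wordImg_cons, List.length_append, List.length_cons, Nat.mul_succ]
    have := hσ c
    omega

lemma prefixImg_eq_wordImg (σ : A → List B) (x : ℕ → A) (n : ℕ) :
    prefixImg σ x n = wordImg σ (seqPrefix x n) := rfl

lemma prefixImg_succ (σ : A → List B) (x : ℕ → A) (n : ℕ) :
    prefixImg σ x (n + 1) = prefixImg σ x n ++ σ (x n) := by
  simp [prefixImg_eq_wordImg, seqPrefix_succ]

lemma prefixImg_consSeq (σ : A → List B) (c : A) (x : ℕ → A) (n : ℕ) :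
    prefixImg σ (consSeq c x) (n + 1) = σ c ++ prefixImg σ x n := by
  rw [prefixImg_eq_wordImg, seqPrefix_consSeq, wordImg_cons, prefixImg_eq_wordImg]

lemma prefixImg_prefix_prefixImg (σ : A → List B) (x : ℕ → A) {m n : ℕ} (h : m ≤ n) :
    prefixImg σ x m <+: prefixImg σ x n := by
  induction n, h using Nat.le_induction with
  | base => exact List.prefix_refl _
  | succ n _ ih => exact ih.trans (by rw [prefixImg_succ]; exact List.prefix_append _ _)

lemma le_length_prefixImg (hσ : ∀ c, σ c ≠ []) (x : ℕ → A) (n : ℕ) :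
    n ≤ (prefixImg σ x n).length := by
  simpa [prefixImg_eq_wordImg] using
    le_length_wordImg (fun c => List.length_pos_iff.mpr (hσ c)) (seqPrefix x n)

lemma oneSidedImage_iff {x : ℕ → A} {y : ℕ → B} :
    OneSidedImage σ x y ↔ (∀ m, ∃ n, m ≤ (prefixImg σ x n).length) ∧
      ∀ n, IsSeqPrefix (prefixImg σ x n) y := by
  simp only [OneSidedImage, IsSeqPrefix, List.get_eq_getElem, eq_comm]

lemma oneSidedImage_of_isSeqPrefix (hσ : ∀ c, σ c ≠ []) {x : ℕ → A} {y : ℕ → B}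
    (h : ∀ n, IsSeqPrefix (prefixImg σ x n) y) : OneSidedImage σ x y :=
  oneSidedImage_iff.mpr ⟨fun m => ⟨m, le_length_prefixImg hσ x m⟩, h⟩

lemma exists_oneSidedImage (hσ : ∀ c, σ c ≠ []) (x : ℕ → A) : ∃ y, OneSidedImage σ x y := by
  have hlt (j : ℕ) : j < (prefixImg σ x (j + 1)).length := le_length_prefixImg hσ x (j + 1)
  refine ⟨fun j => (prefixImg σ x (j + 1))[j]'(hlt j), oneSidedImage_of_isSeqPrefix hσ ?_⟩
  intro n i hi
  rcases le_total n (i + 1) with hle | hle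
  · exact (prefixImg_prefix_prefixImg σ x hle).getElem hi
  · exact ((prefixImg_prefix_prefixImg σ x hle).getElem (hlt i)).symm

lemma OneSidedImage.isSeqPrefix_wordImg {x : ℕ → A} {y : ℕ → B} (h : OneSidedImage σ x y)
    {w : List A} (hw : IsSeqPrefix w x) : IsSeqPrefix (wordImg σ w) y := by
  have hw' : w = seqPrefix x w.length :=
    List.ext_getElem (by simp) fun i h₁ _ => by simp [hw i h₁]
  rw [hw']
  exact (oneSidedImage_iff.mp h).2 _

lemma OneSidedImage.consSeq_of_eq_append {x : ℕ → A} {y : ℕ → B} {c d : A} {u : List B}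
    (h : OneSidedImage σ (consSeq d x) y) (hcd : σ c = u ++ σ d) :
    OneSidedImage σ (consSeq c x) (prependSeq u y) := by
  obtain ⟨hunb, hpre⟩ := oneSidedImage_iff.mp h
  have himg (n : ℕ) : prefixImg σ (consSeq c x) (n + 1) = u ++ prefixImg σ (consSeq d x) (n + 1) := by
    rw [prefixImg_consSeq, prefixImg_consSeq, hcd, List.append_assoc]
  refine oneSidedImage_iff.mpr ⟨fun m => ?_, fun n => ?_⟩
  · obtain ⟨n, hn⟩ := hunb m
    have := (prefixImg_prefix_prefixImg σ (consSeq d x) (Nat.le_add_right n 1)).length_le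
    exact ⟨n + 1, by rw [himg, List.length_append]; omega⟩
  · cases n with
    | zero => exact isSeqPrefix_nil _
    | succ n => rw [himg]; exact (hpre (n + 1)).prependSeq u

lemma OneSidedImage.consSeq {x : ℕ → A} {y : ℕ → B} (h : OneSidedImage σ x y) (c : A) :
    OneSidedImage σ (consSeq c x) (prependSeq (σ c) y) := by
  obtain ⟨hunb, hpre⟩ := oneSidedImage_iff.mp h
  refine oneSidedImage_iff.mpr ⟨fun m => ?_, fun n => ?_⟩
  · obtain ⟨n, hn⟩ := hunb m
    exact ⟨n + 1, by rw [prefixImg_consSeq, List.length_append]; omega⟩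
  · cases n with
    | zero => exact isSeqPrefix_nil _
    | succ n => rw [prefixImg_consSeq]; exact (hpre n).prependSeq (σ c)

end Morphism

section Iterate

variable {σ : A → List A}

lemma iterate_substWord_append (σ : A → List A) (n : ℕ) (u v : List A) :
    (substWord σ)^[n] (u ++ v) = (substWord σ)^[n] u ++ (substWord σ)^[n] v := by
  induction n generalizing u v with
  | zero => rfl
  | succ n ih => simp only [Function.iterate_succ_apply, substWord, wordImg_append, ih]

lemma iterate_substWord_infix (σ : A → List A) (n : ℕ) {u v : List A} (h : u <:+: v) :
    (substWord σ)^[n] u <:+: (substWord σ)^[n] v := by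
  obtain ⟨s, e, rfl⟩ := h
  exact ⟨_, _, by rw [iterate_substWord_append, iterate_substWord_append]⟩

lemma wordPow_succ (σ : A → List A) (n : ℕ) (c : A) :
    wordPow σ (n + 1) c = (substWord σ)^[n] (σ c) := by
  simp [wordPow, substWord, wordImg]

lemma wordPow_ne_nil (hσ : ∀ c, σ c ≠ []) (n : ℕ) (c : A) : wordPow σ n c ≠ [] := by
  induction n generalizing c with
  | zero => simp [wordPow]
  | succ n ih =>
    obtain ⟨d, w, hd⟩ := List.exists_cons_of_ne_nil (hσ c)
    rw [wordPow_succ, hd, ← List.singleton_append, iterate_substWord_append]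
    exact mt (fun h => (List.append_eq_nil_iff.mp h).1) (ih d)

lemma InLangSigma.of_infix {u v : List A} (hv : InLangSigma σ v) (h : u <:+: v) :
    InLangSigma σ u :=
  let ⟨n, c, hn⟩ := hv
  ⟨n, c, h.trans hn⟩

lemma OneSidedImage.isSeqPrefix_iterate_two_mul {x y : ℕ → A} (hxy : OneSidedImage σ x y)
    (hyx : OneSidedImage σ y x) {w : List A} (hw : IsSeqPrefix w x) (k : ℕ) :
    IsSeqPrefix ((substWord σ)^[2 * k] w) x := by
  induction k with
  | zero => exact hw
  | succ k ih =>
    rw [Nat.mul_succ, add_comm, Function.iterate_add_apply]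
    exact hyx.isSeqPrefix_wordImg (hxy.isSeqPrefix_wordImg ih)

end Iterate

section TwoSided

def window (x : ℤ → A) (k : ℤ) (n : ℕ) : List A := List.ofFn fun i : Fin n => x (k + i)

lemma window_add (x : ℤ → A) (k : ℤ) (m n : ℕ) :
    window x k (m + n) = window x k m ++ window x (k + m) n := by
  simp [window, List.ofFn_add, add_assoc]

lemma window_infix (x : ℤ → A) {k k' : ℤ} {n n' : ℕ} (hk : k ≤ k') (hn : k' + n' ≤ k + n) :
    window x k' n' <:+: window x k n := by
  obtain ⟨a, rfl⟩ : ∃ a : ℕ, k' = k + a := ⟨(k' - k).toNat, by omega⟩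
  obtain ⟨b, rfl⟩ : ∃ b : ℕ, n = a + n' + b := ⟨n - a - n', by omega⟩
  rw [window_add, window_add]
  exact ⟨_, _, rfl⟩

/-- The two-sided sequence `⋯ v₁ v₀ . u₀ u₁ ⋯`, with `v` read leftwards from position `-1`. -/
def joinSeq (v u : ℕ → A) : ℤ → A
  | .ofNat n => u n
  | .negSucc n => v n

lemma window_joinSeq (v u : ℕ → A) (m : ℕ) :
    window (joinSeq v u) (-m) (m + m) = (seqPrefix v m).reverse ++ seqPrefix u m := by
  rw [window_add, neg_add_cancel]
  congr 1
  · apply List.ext_getElem (by simp [window])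
    intro i h _
    simp only [window, List.length_ofFn] at h
    have : -(m : ℤ) + i = .negSucc (m - 1 - i) := by rw [Int.negSucc_eq]; omega
    simp [window, List.getElem_reverse, this, joinSeq]
  · simp [window, seqPrefix, joinSeq]

lemma joinSeq_mem_Xsig {σ : A → List A} {v u : ℕ → A}
    (h : ∀ m, InLangSigma σ ((seqPrefix v m).reverse ++ seqPrefix u m)) :
    joinSeq v u ∈ Xsig σ := by
  intro k n
  set M := k.natAbs + n
  have hwin := window_infix (joinSeq v u) (k := -M) (n := M + M) (k' := k) (n' := n)
    (by omega) (by omega)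
  rw [window_joinSeq] at hwin
  exact (h _).of_infix hwin

lemma shiftZ_mem_Xsig {σ : A → List A} {x : ℤ → A} (hx : x ∈ Xsig σ) : shiftZ x ∈ Xsig σ := by
  intro k n
  convert hx (k + 1) n using 2
  funext i
  simp only [shiftZ]
  ring_nf

lemma mem_SetPlus_Xsig_of_consSeq {σ : A → List A} {c : A} {x : ℕ → A}
    (h : consSeq c x ∈ SetPlus (Xsig σ)) : x ∈ SetPlus (Xsig σ) := by
  obtain ⟨y, hy, hyx⟩ := h
  refine ⟨shiftZ y, shiftZ_mem_Xsig hy, funext fun n => ?_⟩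
  simpa [plusSeq, shiftZ, consSeq] using congrFun hyx (n + 1)

end TwoSided

section Fibonacci

lemma tfib_ne_nil : ∀ c, tfib c ≠ [] := by decide

lemma false_cons_wordImg_tfib (w : List Bool) :
    false :: wordImg tfib w = wordImg fib w ++ [false] := by
  induction w with
  | nil => rfl
  | cons c w ih => cases c <;> simp [fib, tfib, ih]

lemma reverse_substWord_tfib (w : List Bool) :
    (substWord tfib w).reverse = substWord fib w.reverse := by
  induction w with
  | nil => rfl
  | cons c w ih => cases c <;> simp_all [substWord, fib, tfib]

lemma reverse_iterate_substWord_tfib (n : ℕ) (w : List Bool) :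
    ((substWord tfib)^[n] w).reverse = (substWord fib)^[n] w.reverse := by
  induction n generalizing w with
  | zero => rfl
  | succ n ih => rw [Function.iterate_succ_apply, ih, reverse_substWord_tfib]; rfl

lemma lt_length_iterate_two_mul_tfib (k : ℕ) (c : Bool) :
    k < ((substWord tfib)^[2 * k] [c]).length := by
  induction k with
  | zero => simp
  | succ k ih =>
    rw [Nat.mul_succ, Function.iterate_succ_apply', Function.iterate_succ_apply']
    have h2 := le_length_wordImg (k := 2) (σ := fun c => wordImg tfib (tfib c)) (by decide)
      ((substWord tfib)^[2 * k] [c])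
    rw [← wordImg_wordImg] at h2
    show k + 1 < (wordImg tfib (wordImg tfib _)).length
    omega

lemma wordPow_tfib_succ_false (m : ℕ) :
    wordPow tfib (m + 1) false = wordPow tfib m true ++ wordPow tfib (m + 1) true := by
  rw [wordPow_succ, wordPow_succ]
  exact iterate_substWord_append tfib m [true] [false]

variable {t : ℕ → Bool} (ht : OneSidedImage fib t t)
include ht

lemma isSeqPrefix_prefixImg_fib_append_false (k : ℕ) :
    IsSeqPrefix (prefixImg fib t k ++ [false]) t := by
  refine ((oneSidedImage_iff.mp ht).2 (k + 1)).of_prefix ?_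
  rw [prefixImg_succ, List.prefix_append_right_inj]
  cases t k <;> decide

lemma oneSidedImage_tfib_consSeq_true : OneSidedImage tfib (consSeq true t) t := by
  refine oneSidedImage_of_isSeqPrefix tfib_ne_nil fun n => ?_
  cases n with
  | zero => exact isSeqPrefix_nil _
  | succ k =>
    rw [prefixImg_consSeq]
    simpa [tfib, false_cons_wordImg_tfib, prefixImg_eq_wordImg]
      using isSeqPrefix_prefixImg_fib_append_false ht k

lemma oneSidedImage_tfib_consSeq_false :
    OneSidedImage tfib (consSeq false t) (consSeq true t) := by
  simpa [prependSeq_cons, prependSeq_nil] using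
    (oneSidedImage_tfib_consSeq_true ht).consSeq_of_eq_append (c := false) (u := [true]) rfl

lemma oneSidedImage_tfib_consSeq_consSeq (c : Bool) :
    OneSidedImage tfib (consSeq c (consSeq (!c) t)) (consSeq (!c) (consSeq c t)) := by
  cases c
  · simpa [tfib, prependSeq_cons, prependSeq_nil] using
      (oneSidedImage_tfib_consSeq_true ht).consSeq false
  · simpa [tfib, prependSeq_cons, prependSeq_nil] using
      (oneSidedImage_tfib_consSeq_false ht).consSeq true

lemma reverse_seqPrefix_suffix_iterate_tfib (m : ℕ) :
    (seqPrefix t m).reverse <:+ (substWord tfib)^[2 * m] [false] := by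
  have hpre : IsSeqPrefix ((substWord fib)^[2 * m] [false]) t := by
    refine ht.isSeqPrefix_iterate_two_mul ht ?_ m
    simpa [prefixImg] using isSeqPrefix_prefixImg_fib_append_false ht 0
  rw [← List.reverse_prefix, List.reverse_reverse, reverse_iterate_substWord_tfib]
  refine hpre.seqPrefix_prefix ?_
  have hlen := lt_length_iterate_two_mul_tfib m false
  rw [← List.length_reverse, reverse_iterate_substWord_tfib] at hlen
  exact hlen.le

lemma seqPrefix_consSeq_consSeq_prefix_iterate_tfib (c : Bool) (m : ℕ) :
    seqPrefix (consSeq c (consSeq (!c) t)) m <+: (substWord tfib)^[2 * m] [c] := by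
  refine IsSeqPrefix.seqPrefix_prefix ?_ (lt_length_iterate_two_mul_tfib m c).le
  refine (oneSidedImage_tfib_consSeq_consSeq ht c).isSeqPrefix_iterate_two_mul ?_ ?_ m
  · simpa using oneSidedImage_tfib_consSeq_consSeq ht (!c)
  · exact fun i h => by simp at h; subst h; rfl

lemma inLangSigma_tfib_reverse_append (c : Bool) (m : ℕ) :
    InLangSigma tfib ((seqPrefix t m).reverse ++ seqPrefix (consSeq c (consSeq (!c) t)) m) := by
  obtain ⟨s, hs⟩ := reverse_seqPrefix_suffix_iterate_tfib ht m
  obtain ⟨e, he⟩ := seqPrefix_consSeq_consSeq_prefix_iterate_tfib ht c m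
  refine ⟨2 * m + 3, false, ?_⟩
  rw [Function.iterate_add_apply]
  refine List.IsInfix.trans ⟨s, e, ?_⟩ (iterate_substWord_infix tfib (2 * m)
    (show [false, c] <:+: (substWord tfib)^[3] [false] by cases c <;> decide))
  rw [← List.singleton_append, iterate_substWord_append, ← hs, ← he]
  simp

lemma consSeq_mem_SetPlus_Xsig_tfib (c : Bool) : consSeq c t ∈ SetPlus (Xsig tfib) := by
  refine mem_SetPlus_Xsig_of_consSeq (c := !c) ⟨joinSeq t (consSeq (!c) (consSeq c t)), ?_, rfl⟩
  simpa using joinSeq_mem_Xsig (inLangSigma_tfib_reverse_append ht (!c))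

end Fibonacci

theorem stmt16_general (t : ℕ → Bool) (ht : OneSidedImage fib t t) :
    OneSidedImage tfib (consSeq true t) t ∧
    (∃ z, OneSidedImage tfib (consSeq false t) z ∧ ∀ j, t j = z (j + 1)) ∧
    ∀ n : ℕ, 1 ≤ n → ∀ i : ℕ, i < (wordPow tfib n true).length →
      ∃ y : ℕ → Bool,
        (∃ z, OneSidedImage (wordPow tfib n) (consSeq true t) z ∧
          ∀ j, y j = z (j + i)) ∧
        IsRepN (wordPow tfib n) (SetPlus (Xsig tfib)) y (consSeq true t) i ∧
        IsRepN (wordPow tfib n) (SetPlus (Xsig tfib)) y (consSeq false t)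
          ((wordPow tfib (n - 1) true).length + i) ∧
        consSeq true t ≠ consSeq false t := by
  refine ⟨oneSidedImage_tfib_consSeq_true ht,
    ⟨_, oneSidedImage_tfib_consSeq_false ht, fun _ => rfl⟩, fun n hn i hi => ?_⟩
  obtain ⟨m, rfl⟩ := Nat.exists_eq_add_of_le' hn
  rw [Nat.add_sub_cancel]
  obtain ⟨w, hw⟩ := exists_oneSidedImage (wordPow_ne_nil tfib_ne_nil (m + 1)) t
  set z := prependSeq (wordPow tfib (m + 1) true) w
  have hz : OneSidedImage (wordPow tfib (m + 1)) (consSeq true t) z := hw.consSeq true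
  have hz' : OneSidedImage (wordPow tfib (m + 1)) (consSeq false t)
      (prependSeq (wordPow tfib m true) z) := by
    rw [← prependSeq_append, ← wordPow_tfib_succ_false]
    exact hw.consSeq false
  refine ⟨fun j => z (j + i), ⟨z, hz, fun _ => rfl⟩,
    ⟨consSeq_mem_SetPlus_Xsig_tfib ht true, hi, z, hz, fun _ => rfl⟩,
    ⟨consSeq_mem_SetPlus_Xsig_tfib ht false, ?_, _, hz', fun j => ?_⟩, ?_⟩
  · change _ < (wordPow tfib (m + 1) false).length
    rw [wordPow_tfib_succ_false, List.length_append]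
    omega
  · rw [Nat.add_left_comm, prependSeq_length_add]
  · exact fun h => by simpa [consSeq] using congrFun h 0

/-- with `t` the fixed point of the Fibonacci morphism, one has
`t = σ̃(bt) = S σ̃(at)`, and for every `n ≥ 1` and `0 ≤ i < F_{n+1}` the point
`S^i σ̃ⁿ(bt)` has the two distinct `σ̃ⁿ`-representations `(bt, i)` and
`(at, F_n + i)`; hence the number of failure points of one-sided
recognizability can be arbitrarily large. -/
theorem stmt16 (t : ℕ → Bool) (ht : OneSidedImage fib t t) (ht0 : t 0 = false) :
    OneSidedImage tfib (consSeq true t) t ∧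
    (∃ z, OneSidedImage tfib (consSeq false t) z ∧ ∀ j, t j = z (j + 1)) ∧
    ∀ n : ℕ, 1 ≤ n → ∀ i : ℕ, i < (wordPow tfib n true).length →
      ∃ y : ℕ → Bool,
        (∃ z, OneSidedImage (wordPow tfib n) (consSeq true t) z ∧
          ∀ j, y j = z (j + i)) ∧
        IsRepN (wordPow tfib n) (SetPlus (Xsig tfib)) y (consSeq true t) i ∧
        IsRepN (wordPow tfib n) (SetPlus (Xsig tfib)) y (consSeq false t)
          ((wordPow tfib (n - 1) true).length + i) ∧
        consSeq true t ≠ consSeq false t :=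
  stmt16_general t ht
end
end

section
/- Let X be a recurrent shift space on a finite alphabet. Then the continuous spectrum of (X, S) equals the continuous spectrum of the one-sided shift (X⁺, S): λ is a continuous eigenvalue of X if and only if it is a continuous eigenvalue of X⁺. -/
/-!
A continuous eigenfunction `f` that is not identically zero forces `1 ≤ ‖λ‖`, because the shift
maps the compact set `X` onto itself. If `x⁺ = x'⁺`, then `f (Sⁿ x) - f (Sⁿ x') = λⁿ (f x - f x')`
while the pairs `(Sⁿ x, Sⁿ x')` accumulate only on the diagonal of `X × X`; hence `f x = f x'`.
So `f` factors through `x ↦ x⁺`, a continuous surjection from the compact `X` onto the Hausdorff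
`X⁺`, hence a quotient map, and the factor is a continuous eigenfunction of `X⁺`. Conversely an
eigenfunction `g` of `X⁺` pulls back to the eigenfunction `x ↦ g x⁺` of `X`.
-/

open scoped Classical

noncomputable section

variable {A B : Type*}

/-- `lam` is a continuous eigenvalue of the two-sided shift space `X`. -/
def ContEigZ [TopologicalSpace A] (X : Set (ℤ → A)) (lam : ℂ) : Prop :=
  ∃ f : (ℤ → A) → ℂ, ContinuousOn f X ∧ (∃ x ∈ X, f x ≠ 0) ∧
    ∀ x ∈ X, f (shiftZ x) = lam * f x

/-- `lam` is a continuous eigenvalue of the one-sided shift space `X`. -/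
def ContEigN [TopologicalSpace A] (X : Set (ℕ → A)) (lam : ℂ) : Prop :=
  ∃ f : (ℕ → A) → ℂ, ContinuousOn f X ∧ (∃ x ∈ X, f x ≠ 0) ∧
    ∀ x ∈ X, f (shiftN x) = lam * f x


open Set Filter Function

section Eigenfunction

variable {Y : Type*} {s : Set Y} {T : Y → Y} {f : Y → ℂ} {lam : ℂ}

lemma apply_iterate_eq_pow_mul (hT : MapsTo T s s) (heig : ∀ x ∈ s, f (T x) = lam * f x)
    (n : ℕ) {x : Y} (hx : x ∈ s) : f (T^[n] x) = lam ^ n * f x := by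
  induction n with
  | zero => simp
  | succ n ih =>
    rw [iterate_succ_apply', heig _ (hT.iterate n hx), ih, pow_succ]
    ring

variable [TopologicalSpace Y]

lemma one_le_norm_of_eigenfunction (hs : IsCompact s) (hTm : MapsTo T s s) (hTs : SurjOn T s s)
    (hf : ContinuousOn f s) (hnz : ∃ x ∈ s, f x ≠ 0) (heig : ∀ x ∈ s, f (T x) = lam * f x) :
    1 ≤ ‖lam‖ := by
  by_contra! hlam
  obtain ⟨x₀, hx₀, hfx₀⟩ := hnz
  obtain ⟨M, hM⟩ := hs.exists_bound_of_continuousOn hf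
  have hbound : ∀ n : ℕ, ‖f x₀‖ ≤ ‖lam‖ ^ n * M := by
    intro n
    obtain ⟨y, hy, rfl⟩ := hTs.iterate n hx₀
    rw [apply_iterate_eq_pow_mul hTm heig n hy, norm_mul, norm_pow]
    exact mul_le_mul_of_nonneg_left (hM y hy) (by positivity)
  have hlim : Tendsto (fun n : ℕ => ‖lam‖ ^ n * M) atTop (nhds 0) := by
    simpa using (tendsto_pow_atTop_nhds_zero_of_lt_one (norm_nonneg lam) hlam).mul_const M
  exact hfx₀ (norm_le_zero_iff.mp (ge_of_tendsto' hlim hbound))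

lemma eq_of_eigenfunction_of_mapClusterPt_diagonal (hs : IsCompact s) (hT : MapsTo T s s)
    (hf : ContinuousOn f s) (hlam : 1 ≤ ‖lam‖) (heig : ∀ x ∈ s, f (T x) = lam * f x)
    {x x' : Y} (hx : x ∈ s) (hx' : x' ∈ s)
    (hdiag : ∀ q, MapClusterPt q atTop (fun n => (T^[n] x, T^[n] x')) → q.1 = q.2) :
    f x = f x' := by
  by_contra hne
  set p : ℕ → Y × Y := fun n => (T^[n] x, T^[n] x')
  set h : Y × Y → ℂ := fun q => f q.1 - f q.2
  have hp : ∀ n, p n ∈ s ×ˢ s := fun n => ⟨hT.iterate n hx, hT.iterate n hx'⟩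
  have hgrow : ∀ n, ‖h (p 0)‖ ≤ ‖h (p n)‖ := fun n => by
    simp only [h, p, iterate_zero, id, apply_iterate_eq_pow_mul hT heig n hx,
      apply_iterate_eq_pow_mul hT heig n hx', ← mul_sub, norm_mul, norm_pow]
    exact le_mul_of_one_le_left (norm_nonneg _) (one_le_pow₀ hlam)
  have hp' : map p atTop ≤ 𝓟 (s ×ˢ s) := tendsto_principal.2 (Eventually.of_forall hp)
  obtain ⟨q, hq, hqp⟩ := (hs.prod hs).exists_mapClusterPt hp'
  have hh : ContinuousOn h (s ×ˢ s) :=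
    (hf.comp continuous_fst.continuousOn fun _ hr => hr.1).sub
      (hf.comp continuous_snd.continuousOn fun _ hr => hr.2)
  have hclust : MapClusterPt (h q) atTop (h ∘ p) :=
    hqp.tendsto_comp' ((hh q hq).mono_left (inf_le_inf_left _ hp'))
  have hle : ‖h (p 0)‖ ≤ ‖h q‖ :=
    (isClosed_le continuous_const continuous_norm).mem_of_mapClusterPt hclust
      (Eventually.of_forall hgrow)
  rw [show h q = 0 from sub_eq_zero.2 (congrArg f (hdiag q hqp)), norm_zero] at hle
  exact hne (sub_eq_zero.1 (norm_le_zero_iff.1 hle))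

end Eigenfunction

section Quotient

variable {α β γ : Type*} [Nonempty α] {s : Set α} {π : α → β} {f : α → γ}

lemma comp_invFunOn_apply (hfib : ∀ x ∈ s, ∀ y ∈ s, π x = π y → f x = f y) {x : α}
    (hx : x ∈ s) : (f ∘ invFunOn π s) (π x) = f x :=
  hfib _ (invFunOn_mem ⟨x, hx, rfl⟩) x hx (invFunOn_eq ⟨x, hx, rfl⟩)

lemma continuousOn_comp_invFunOn [TopologicalSpace α] [TopologicalSpace β] [T2Space β]
    [TopologicalSpace γ] (hs : IsCompact s) (hπ : Continuous π)
    (hf : ContinuousOn f s) (hfib : ∀ x ∈ s, ∀ y ∈ s, π x = π y → f x = f y) :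
    ContinuousOn (f ∘ invFunOn π s) (π '' s) := by
  have : CompactSpace s := isCompact_iff_compactSpace.mp hs
  set πs : s → π '' s := (mapsTo_image π s).restrict π s (π '' s)
  have hπs : Continuous πs := hπ.restrict _
  have hq : Topology.IsQuotientMap πs :=
    .of_surjective_continuous (surjective_mapsTo_image_restrict π s) hπs
  have hfactor : (π '' s).domRestrict (f ∘ invFunOn π s) ∘ πs = s.domRestrict f :=
    funext fun x => comp_invFunOn_apply hfib x.2
  rw [continuousOn_iff_continuous_domRestrict, hq.continuous_iff, hfactor]
  exact continuousOn_iff_continuous_domRestrict.1 hf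

end Quotient

section Shift

lemma plusSeq_shiftZ (x : ℤ → A) : plusSeq (shiftZ x) = shiftN (plusSeq x) := by
  funext n
  simp [plusSeq, shiftZ, shiftN]

lemma continuous_plusSeq [TopologicalSpace A] : Continuous (plusSeq : (ℤ → A) → ℕ → A) :=
  continuous_pi fun n => continuous_apply (n : ℤ)

lemma shiftZ_iterate_apply (x : ℤ → A) (n : ℕ) (i : ℤ) : shiftZ^[n] x i = x (i + n) := by
  induction n generalizing x with
  | zero => simp
  | succ n ih =>
    rw [iterate_succ_apply, ih]
    simp only [shiftZ, Nat.cast_succ, add_assoc, add_comm (n : ℤ) 1]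

lemma apply_eq_of_plusSeq_eq {x x' : ℤ → A} (h : plusSeq x = plusSeq x') {i : ℤ} (hi : 0 ≤ i) :
    x i = x' i := by
  lift i to ℕ using hi
  exact congrFun h i

lemma mapClusterPt_shiftZ_iterate_diagonal [TopologicalSpace A] [T2Space A] {x x' : ℤ → A}
    (h : plusSeq x = plusSeq x') {q : (ℤ → A) × (ℤ → A)}
    (hq : MapClusterPt q atTop fun n => (shiftZ^[n] x, shiftZ^[n] x')) : q.1 = q.2 := by
  funext i
  refine (isClosed_eq ((continuous_apply i).comp continuous_fst)
    ((continuous_apply i).comp continuous_snd)).mem_of_mapClusterPt hq ?_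
  filter_upwards [eventually_ge_atTop i.natAbs] with n hn
  simp only [comp_apply, shiftZ_iterate_apply]
  exact apply_eq_of_plusSeq_eq h (by omega)

variable [TopologicalSpace A] {X : Set (ℤ → A)}

lemma IsShiftZ.mapsTo (hX : IsShiftZ X) : MapsTo shiftZ X X :=
  mapsTo_iff_image_subset.2 hX.2.subset

lemma IsShiftZ.surjOn (hX : IsShiftZ X) : SurjOn shiftZ X X :=
  hX.2.symm.subset

lemma IsShiftZ.eigenfunction_eq_of_plusSeq_eq [CompactSpace A] [T2Space A] (hX : IsShiftZ X)
    {f : (ℤ → A) → ℂ} {lam : ℂ} (hf : ContinuousOn f X) (hnz : ∃ x ∈ X, f x ≠ 0)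
    (heig : ∀ x ∈ X, f (shiftZ x) = lam * f x) {x x' : ℤ → A} (hx : x ∈ X) (hx' : x' ∈ X)
    (h : plusSeq x = plusSeq x') : f x = f x' :=
  eq_of_eigenfunction_of_mapClusterPt_diagonal hX.1.isCompact hX.mapsTo hf
    (one_le_norm_of_eigenfunction hX.1.isCompact hX.mapsTo hX.surjOn hf hnz heig) heig hx hx'
    fun _ => mapClusterPt_shiftZ_iterate_diagonal h

end Shift

theorem stmt18_general {A : Type*} [Fintype A] [TopologicalSpace A] [DiscreteTopology A]
    (X : Set (ℤ → A)) (hX : IsShiftZ X) (lam : ℂ) :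
    ContEigZ X lam ↔ ContEigN (SetPlus X) lam := by
  constructor
  · rintro ⟨f, hf, ⟨x₀, hx₀, hfx₀⟩, heig⟩
    have : Nonempty (ℤ → A) := ⟨x₀⟩
    have hfib : ∀ x ∈ X, ∀ x' ∈ X, plusSeq x = plusSeq x' → f x = f x' :=
      fun x hx x' hx' => hX.eigenfunction_eq_of_plusSeq_eq hf ⟨x₀, hx₀, hfx₀⟩ heig hx hx'
    have hg : ∀ x ∈ X, (f ∘ invFunOn plusSeq X) (plusSeq x) = f x :=
      fun x hx => comp_invFunOn_apply hfib hx
    refine ⟨f ∘ invFunOn plusSeq X,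
      continuousOn_comp_invFunOn hX.1.isCompact continuous_plusSeq hf hfib,
      ⟨plusSeq x₀, mem_image_of_mem _ hx₀, by rwa [hg x₀ hx₀]⟩, ?_⟩
    rintro _ ⟨x, hx, rfl⟩
    rw [← plusSeq_shiftZ, hg _ (hX.mapsTo hx), hg x hx, heig x hx]
  · rintro ⟨g, hg, ⟨_, ⟨x₀, hx₀, rfl⟩, hgx₀⟩, heig⟩
    refine ⟨g ∘ plusSeq, hg.comp continuous_plusSeq.continuousOn (mapsTo_image _ _),
      ⟨x₀, hx₀, hgx₀⟩, fun x hx => ?_⟩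
    simpa only [comp_apply, plusSeq_shiftZ] using heig _ (mem_image_of_mem _ hx)

/-- for a recurrent shift space `X`, the continuous spectra of
`X` and of `X⁺` coincide. -/
theorem stmt18 {A : Type*} [Fintype A] [TopologicalSpace A] [DiscreteTopology A]
    (X : Set (ℤ → A)) (hX : IsShiftZ X)
    (hrec : ∃ x ∈ X, ∀ y ∈ X, y ∈ closure {z : ℤ → A | ∃ n : ℕ, ∀ i, z i = x (i + n)})
    (lam : ℂ) :
    ContEigZ X lam ↔ ContEigN (SetPlus X) lam :=
  stmt18_general X hX lam
end
end
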